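/- Fix α ∈ (0,1) and β > 0. If the per-item scale c is distributed with density g(c) = κ c^(β−1) on (0, c_max) for some κ, c_max > 0, then the population-averaged retention R̄(t) = ∫₀^{c_max} exp(−c t^(1−α)) g(c) dc satisfies t^{β(1−α)} R̄(t) → κ Γ(β) as t → ∞. -/
import Mathlib

open Real MeasureTheory Filter Set

/-- Population Power Law from Heterogeneity: averaging stretched-exponential retentions
`exp(−c t^(1−α))` against a density `g(c) = κ c^(β−1)` on `(0, c_max)` gives a population
retention with `t^{β(1−α)} R̄(t) → κ Γ(β)` as `t → ∞`. -/
theorem population_power_law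
    (α β κ cmax : ℝ) (hα0 : 0 < α) (hα1 : α < 1)
    (hβ : 0 < β) (hκ : 0 < κ) (hcmax : 0 < cmax) :
    Filter.Tendsto
      (fun t : ℝ => t ^ (β * (1 - α)) *
        ∫ c in (0:ℝ)..cmax, Real.exp (-(c * t ^ (1 - α))) * (κ * c ^ (β - 1)))
      Filter.atTop (nhds (κ * Real.Gamma β)) := by
  have h1α : (0:ℝ) < 1 - α := by linarith
  have hint : IntegrableOn (fun x : ℝ => Real.exp (-x) * x ^ (β - 1)) (Ioi 0) :=
    Real.GammaIntegral_convergent hβ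
  have hbnd : Tendsto (fun t : ℝ => cmax * t ^ (1 - α)) atTop atTop :=
    (tendsto_rpow_atTop h1α).const_mul_atTop hcmax
  have hI : Tendsto
      (fun t : ℝ => ∫ u in (0:ℝ)..(cmax * t ^ (1 - α)), Real.exp (-u) * u ^ (β - 1))
      atTop (nhds (Real.Gamma β)) := by
    rw [Real.Gamma_eq_integral hβ]
    exact MeasureTheory.intervalIntegral_tendsto_integral_Ioi 0 hint hbnd
  refine (hI.const_mul κ).congr' ?_
  filter_upwards [eventually_gt_atTop (0:ℝ)] with t ht
  set s := t ^ (1 - α) with hs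
  have hspos : 0 < s := Real.rpow_pos_of_pos ht _
  have hcongr : (∫ c in (0:ℝ)..cmax, Real.exp (-(c * s)) * (κ * c ^ (β - 1)))
      = ∫ c in (0:ℝ)..cmax,
          (κ * s ^ (1 - β)) * ((fun u => Real.exp (-u) * u ^ (β - 1)) (c * s)) := by
    refine intervalIntegral.integral_congr fun c hc => ?_
    have hc0 : 0 ≤ c := by
      rcases Set.mem_uIcc.mp hc with h | h
      · exact h.1
      · linarith [h.2]
    simp only
    rw [Real.mul_rpow hc0 hspos.le]
    have : s ^ (1 - β) * (Real.exp (-(c * s)) * (c ^ (β - 1) * s ^ (β - 1)))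
        = Real.exp (-(c * s)) * c ^ (β - 1) * (s ^ (1 - β) * s ^ (β - 1)) := by ring
    rw [mul_assoc, this, ← Real.rpow_add hspos]
    norm_num
    ring
  have hcov : (∫ c in (0:ℝ)..cmax, (fun u => Real.exp (-u) * u ^ (β - 1)) (c * s))
      = s⁻¹ • ∫ u in (0:ℝ)*s..(cmax*s), Real.exp (-u) * u ^ (β - 1) :=
    intervalIntegral.integral_comp_mul_right (fun u => Real.exp (-u) * u ^ (β - 1)) hspos.ne'
  rw [hcongr, intervalIntegral.integral_const_mul, hcov, zero_mul, smul_eq_mul]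
  have hpow : t ^ (β * (1 - α)) = s ^ β := by
    rw [mul_comm, Real.rpow_mul ht.le]
  rw [hpow]
  have hs1 : s ^ β * s ^ (1 - β) * s⁻¹ = 1 := by
    have hβ1 : β + (1 - β) = 1 := by ring
    rw [← Real.rpow_add hspos, hβ1, Real.rpow_one, mul_inv_cancel₀ hspos.ne']
  linear_combination (-(κ * (∫ u in (0:ℝ)..(cmax*s), Real.exp (-u) * u ^ (β - 1)))) * hs1
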